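/- With the RASS jamming model, where the received jamming vector at time t has k-th entry q̄_k(t) = α(θ_k)ᴴ(p_k(t) ∘ α(θ_1))·r_k, with p_1(t),...,p_K(t) mutually independent Bernoulli(p) random selection vectors (independent across radars due to distinct delays) and r_k a deterministic complex scalar with |r_k|² = R_rr, the covariance matrix R̄_JJ := E[q̄ q̄ᴴ] equals p²·R_JJ + Np(1-p)·R_rr·I, where R_JJ is the covariance under full-array transmission (p ≡ 1). -/

import Mathlib

open MeasureTheory ProbabilityTheory
open scoped NNReal

/-! Each entry of the jamming covariance is `E[Sₖ Sₗ*]`, where `Sₖ = ∑ₙ cₖₙ bₖₙ` is linear in the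
Bernoulli selections `bₖ` of radar `k`. For `k ≠ l` the selection vectors are independent, so the
expectation factorises into `p (∑ₙ cₖₙ) · p (∑ₙ cₗₙ)*`. For `k = l` one has `E[bₙ bₘ] = p²` off the
diagonal but `p` on it, which adds `p (1 - p) ∑ₙ |cₖₙ|²`; as the steering vectors have unit modulus,
`|cₖₙ|² = |rₖ|² = R_rr` for every `n`. -/

section ProductMeasure

variable {ι X 𝕜 : Type*} [Fintype ι] [DecidableEq ι] [MeasurableSpace X] [RCLike 𝕜]
  (μ : Measure X) [IsProbabilityMeasure μ]

theorem integral_comp_eval_mul_comp_eval_pi {f g : X → 𝕜}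
    (hf : AEStronglyMeasurable f μ) (hg : AEStronglyMeasurable g μ) (k l : ι) :
    ∫ x, f (x k) * g (x l) ∂Measure.pi (fun _ ↦ μ)
      = if k = l then ∫ y, f y * g y ∂μ else (∫ y, f y ∂μ) * ∫ y, g y ∂μ := by
  have hmap : ∀ i, (Measure.pi fun _ : ι ↦ μ).map (fun x ↦ x i) = μ := fun i ↦
    (measurePreserving_eval (fun _ ↦ μ) i).map_eq
  split_ifs with hkl
  · subst hkl
    exact integral_comp_eval (μ := fun _ ↦ μ) (f := fun y ↦ f y * g y) (hf.mul hg)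
  · have hind : IndepFun (fun x : ι → X ↦ x k) (fun x ↦ x l) (Measure.pi fun _ ↦ μ) :=
      (iIndepFun_pi (X := fun _ ↦ id) fun _ ↦ aemeasurable_id).indepFun hkl
    rw [← integral_comp_eval (μ := fun _ ↦ μ) (i := k) hf,
      ← integral_comp_eval (μ := fun _ ↦ μ) (i := l) hg]
    exact hind.integral_comp_mul_comp (measurable_pi_apply k).aemeasurable
      (measurable_pi_apply l).aemeasurable (by rwa [hmap]) (by rwa [hmap])

end ProductMeasure

section BernoulliSelection

variable {ι : Type*} [Fintype ι] (p : ℝ≥0) (hp : p ≤ 1)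

theorem integral_ite_bernoulli :
    ∫ b, (if b then (1 : ℂ) else 0) ∂(PMF.bernoulli p hp).toMeasure = ((p : ℝ) : ℂ) := by
  rw [integral_fintype Integrable.of_finite]
  simp [Measure.real, PMF.toMeasure_apply_singleton _ _ (measurableSet_singleton _),
    PMF.bernoulli_apply]

theorem integral_ite_mul_ite_pi_bernoulli [DecidableEq ι] (n m : ι) :
    ∫ b, (if b n then (1 : ℂ) else 0) * (if b m then 1 else 0)
        ∂Measure.pi (fun _ ↦ (PMF.bernoulli p hp).toMeasure)
      = if n = m then ((p : ℝ) : ℂ) else ((p : ℝ) : ℂ) ^ 2 := by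
  have hsq : ∀ b : Bool, ((if b then (1 : ℂ) else 0) * if b then 1 else 0)
      = if b then 1 else 0 := fun b ↦ by cases b <;> simp
  rw [integral_comp_eval_mul_comp_eval_pi (f := fun b : Bool ↦ if b then (1 : ℂ) else 0)
    (g := fun b : Bool ↦ if b then (1 : ℂ) else 0) _ .of_discrete .of_discrete]
  simp only [hsq, integral_ite_bernoulli, sq]

theorem integral_sum_pi_bernoulli (c : ι → ℂ) :
    ∫ b, ∑ n, c n * (if b n then 1 else 0)
        ∂Measure.pi (fun _ ↦ (PMF.bernoulli p hp).toMeasure)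
      = ((p : ℝ) : ℂ) * ∑ n, c n := by
  rw [integral_finsetSum _ fun _ _ ↦ .of_finite, Finset.mul_sum]
  refine Finset.sum_congr rfl fun n _ ↦ ?_
  rw [integral_const_mul, integral_comp_eval (μ := fun _ : ι ↦ (PMF.bernoulli p hp).toMeasure) (i := n)
      (f := fun b ↦ if b then (1 : ℂ) else 0) .of_discrete,
    integral_ite_bernoulli, mul_comm]

theorem integral_sum_mul_sum_pi_bernoulli (c d : ι → ℂ) :
    ∫ b, (∑ n, c n * (if b n then 1 else 0)) * (∑ m, d m * (if b m then 1 else 0))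
        ∂Measure.pi (fun _ ↦ (PMF.bernoulli p hp).toMeasure)
      = ((p : ℝ) : ℂ) ^ 2 * ((∑ n, c n) * ∑ m, d m)
        + ((p : ℝ) : ℂ) * (1 - (p : ℝ)) * ∑ n, c n * d n := by
  classical
  -- only the diagonal `n = m` carries the variance `p - p²` of a Bernoulli variable
  have hcoeff : ∀ n m : ι, (if n = m then ((p : ℝ) : ℂ) else ((p : ℝ) : ℂ) ^ 2)
      = ((p : ℝ) : ℂ) ^ 2 + if n = m then ((p : ℝ) : ℂ) * (1 - (p : ℝ)) else 0 := by
    intro n m; split_ifs <;> ring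
  simp_rw [Finset.sum_mul_sum]
  rw [integral_finsetSum _ fun _ _ ↦ .of_finite]
  simp_rw [integral_finsetSum _ fun _ _ ↦ Integrable.of_finite, mul_mul_mul_comm _ (ite _ _ _),
    integral_const_mul, integral_ite_mul_ite_pi_bernoulli, hcoeff, mul_add,
    Finset.sum_add_distrib, mul_ite, mul_zero, Finset.sum_ite_eq, Finset.mem_univ, if_true,
    Finset.mul_sum]
  congr 1
  · exact Finset.sum_congr rfl fun _ _ ↦ Finset.sum_congr rfl fun _ _ ↦ by ring
  · exact Finset.sum_congr rfl fun _ _ ↦ by ring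

theorem integral_sum_mul_sum_pi_pi_bernoulli {κ : Type*} [Fintype κ] [DecidableEq κ]
    (c d : κ → ι → ℂ) (k l : κ) :
    ∫ ω, (∑ n, c k n * (if ω k n then 1 else 0)) * (∑ m, d l m * (if ω l m then 1 else 0))
        ∂Measure.pi (fun _ : κ ↦ Measure.pi fun _ : ι ↦ (PMF.bernoulli p hp).toMeasure)
      = ((p : ℝ) : ℂ) ^ 2 * ((∑ n, c k n) * ∑ m, d l m)
        + if k = l then ((p : ℝ) : ℂ) * (1 - (p : ℝ)) * ∑ n, c k n * d k n else 0 := by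
  refine (integral_comp_eval_mul_comp_eval_pi _
    (f := fun b : ι → Bool ↦ ∑ n, c k n * (if b n then 1 else 0))
    (g := fun b : ι → Bool ↦ ∑ m, d l m * (if b m then 1 else 0))
    .of_discrete .of_discrete k l).trans ?_
  split_ifs with hkl
  · subst hkl
    exact integral_sum_mul_sum_pi_bernoulli p hp _ _
  · rw [integral_sum_pi_bernoulli, integral_sum_pi_bernoulli]
    ring

theorem star_sum_mul_ite (c : ι → ℂ) (b : ι → Bool) :
    star (∑ n, c n * (if b n then 1 else 0)) = ∑ n, star (c n) * (if b n then 1 else 0) := by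
  simp only [star_sum, star_mul', apply_ite star, star_one, star_zero]

end BernoulliSelection

/-- Proposition 1: under RASS jamming with independent Bernoulli(p) selection
vectors at the different radars, the jamming covariance matrix satisfies
`R̄_JJ = p²·R_JJ + Np(1-p)·R_rr·I`. -/
theorem rass_jamming_covariance (K N : ℕ) (d lam : ℝ)
    (θ : Fin K → ℝ) (θ1 : ℝ) (α : ℝ → Fin N → ℂ)
    (hα : ∀ ϑ (n : Fin N),
      α ϑ n = Complex.exp (Complex.I * ((2 * Real.pi * (n : ℝ) * d * Real.sin ϑ / lam : ℝ) : ℂ)))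
    (r : Fin K → ℂ) (Rrr : ℝ) (hr : ∀ k, ‖r k‖ ^ 2 = Rrr)
    (p : ℝ≥0) (hp : p ≤ 1)
    (RJJ : Matrix (Fin K) (Fin K) ℂ)
    (hRJJ : RJJ = Matrix.of fun k l =>
      ((∑ n, star (α (θ k) n) * α θ1 n) * r k) * star ((∑ n, star (α (θ l) n) * α θ1 n) * r l)) :
    (Matrix.of fun k l : Fin K =>
        ∫ ω : Fin K → (Fin N → Bool),
          ((∑ n, star (α (θ k) n) * ((if ω k n then (1 : ℂ) else 0) * α θ1 n)) * r k)
            * star ((∑ n, star (α (θ l) n) * ((if ω l n then (1 : ℂ) else 0) * α θ1 n)) * r l)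
          ∂(Measure.pi fun _ : Fin K =>
              Measure.pi fun _ : Fin N => (PMF.bernoulli p (by exact_mod_cast hp)).toMeasure))
      = (((p : ℝ) ^ 2 : ℝ) : ℂ) • RJJ
        + (((N : ℝ) * (p : ℝ) * (1 - (p : ℝ)) * Rrr : ℝ) : ℂ) • (1 : Matrix (Fin K) (Fin K) ℂ) := by
  have hα_unit : ∀ ϑ n, α ϑ n * star (α ϑ n) = 1 := fun ϑ n ↦ by
    rw [Complex.star_def, Complex.mul_conj', hα, mul_comm, Complex.norm_exp_ofReal_mul_I]
    norm_num
  set c : Fin K → Fin N → ℂ := fun k n ↦ star (α (θ k) n) * α θ1 n * r k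
  have hc : ∀ k n, c k n * star (c k n) = Rrr := fun k n ↦ calc
    c k n * star (c k n)
        = (α (θ k) n * star (α (θ k) n)) * (α θ1 n * star (α θ1 n)) * (r k * star (r k)) := by
      simp only [c, star_mul', star_star]; ring
    _ = Rrr := by
      rw [hα_unit, hα_unit, Complex.star_def, Complex.mul_conj', ← hr k]; push_cast; ring
  have hjam : ∀ k (b : Fin N → Bool),
      (∑ n, star (α (θ k) n) * ((if b n then (1 : ℂ) else 0) * α θ1 n)) * r k
        = ∑ n, c k n * if b n then 1 else 0 := fun k b ↦ by
    rw [Finset.sum_mul]; exact Finset.sum_congr rfl fun n _ ↦ by ring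
  have hRJJ_apply : ∀ k l, RJJ k l = (∑ n, c k n) * ∑ m, star (c l m) := fun k l ↦ by
    simp only [hRJJ, Matrix.of_apply, Finset.sum_mul, star_sum, c]
  ext k l
  simp only [Matrix.of_apply, hjam, star_sum_mul_ite]
  rw [integral_sum_mul_sum_pi_pi_bernoulli p hp c (fun l n ↦ star (c l n))]
  simp only [hc, hRJJ_apply, Matrix.add_apply, Matrix.smul_apply, Matrix.one_apply,
    Finset.sum_const, Finset.card_univ, Fintype.card_fin, smul_eq_mul]
  split_ifs <;> push_cast <;> ring
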